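/- arXiv:2309.15752 — 6 statements merged into one kernel-verified Lean document; each statement's English description precedes it below -/
import Mathlib

section
/- Let P ⊆ ℝ^{2d} be a pairwise centrally symmetric 0/1 polytope, Q := conv({p₀ ⊕ p₁ : (p₀,p₁) ∈ ext(P)}) its projection, and for z ∈ {0,1}^d let λ_z(q) := (q ⊕ z, z). Then ext(P) = ⋃_{z ∈ {0,1}^d} λ_z(ext(Q)). -/
noncomputable section

/-- Real-valued 0/1 vector associated to a Boolean vector. -/
def bv {d : ℕ} (v : Fin d → Bool) : Fin d → ℝ := fun i => if v i then 1 else 0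

/-- Componentwise XOR of Boolean vectors. -/
def bxor {d : ℕ} (a b : Fin d → Bool) : Fin d → Bool := fun i => xor (a i) (b i)

/-- The `i`-th standard basis vector as a Boolean vector. -/
def eb {d : ℕ} (i : Fin d) : Fin d → Bool := fun j => decide (j = i)

lemma bv_inj {d : ℕ} : Function.Injective (bv (d := d)) := by
  intro a b h
  funext i
  have := congrFun h i
  simp only [bv] at this
  cases ha : a i <;> cases hb : b i <;> simp [ha, hb] at this <;> rfl

lemma bxor_assoc {d : ℕ} (a b c : Fin d → Bool) :
    bxor (bxor a b) c = bxor a (bxor b c) := by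
  funext i; simp [bxor, Bool.xor_assoc]

lemma bxor_self_right {d : ℕ} (a b : Fin d → Bool) : bxor a (bxor a b) = b := by
  funext i; simp only [bxor]; cases a i <;> cases b i <;> rfl

lemma bxor_cancel {d : ℕ} (a b : Fin d → Bool) : bxor (bxor a b) b = a := by
  funext i; simp only [bxor]; cases a i <;> cases b i <;> rfl

/-- 0/1 points are extreme in any convex subset of the cube containing them. -/
lemma cube_extreme {d : ℕ} (C : Set (Fin d → ℝ))
    (hC : ∀ x ∈ C, ∀ i, 0 ≤ x i ∧ x i ≤ 1) (q : Fin d → Bool) (hq : bv q ∈ C) :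
    bv q ∈ Set.extremePoints ℝ C := by
  refine ⟨hq, fun x₁ hx₁ x₂ hx₂ hseg => ?_⟩
  obtain ⟨a, b, ha, hb, hab, hx⟩ := hseg
  have key : x₁ = bv q ∧ x₂ = bv q := by
    constructor <;> funext i <;> {
      have hi := congrFun hx i
      simp only [Pi.add_apply, Pi.smul_apply, smul_eq_mul] at hi
      have h1 := hC x₁ hx₁ i
      have h2 := hC x₂ hx₂ i
      simp only [bv] at hi ⊢
      cases hqi : q i <;> simp [hqi] at hi ⊢ <;> nlinarith [h1.1, h1.2, h2.1, h2.2]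
    }
  exact key.1

/-- Lifting polytope: the extreme points of a pairwise centrally symmetric
0/1 polytope `P` are recovered from the extreme points of its projection `Q`
via the parametrized lifting maps `λ_z(q) = (q ⊕ z, z)`. -/
theorem stmt2 (d : ℕ) (P : Set ((Fin d → ℝ) × (Fin d → ℝ)))
    (h01 : ∃ S : Set ((Fin d → Bool) × (Fin d → Bool)),
      P = convexHull ℝ ((fun s => (bv s.1, bv s.2)) '' S))
    (hpcs : ∀ p0 p1 : Fin d → Bool, (bv p0, bv p1) ∈ Set.extremePoints ℝ P →
      ∀ i : Fin d,
        (bv (bxor p0 (eb i)), bv (bxor p1 (eb i))) ∈ Set.extremePoints ℝ P)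
    (Q : Set (Fin d → ℝ))
    (hQ : Q = convexHull ℝ {x | ∃ p0 p1 : Fin d → Bool,
        (bv p0, bv p1) ∈ Set.extremePoints ℝ P ∧ x = bv (bxor p0 p1)}) :
    Set.extremePoints ℝ P =
      ⋃ z : Fin d → Bool,
        (fun q : Fin d → Bool => (bv (bxor q z), bv z)) ''
          {q : Fin d → Bool | bv q ∈ Set.extremePoints ℝ Q} := by
  classical
  obtain ⟨S, hS⟩ := h01
  -- extreme points of P are 0/1 points
  have hPext : ∀ x ∈ Set.extremePoints ℝ P,
      ∃ p0 p1 : Fin d → Bool, x = (bv p0, bv p1) := by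
    intro x hx
    rw [hS] at hx
    obtain ⟨⟨p0, p1⟩, _, rfl⟩ := extremePoints_convexHull_subset hx
    exact ⟨p0, p1, rfl⟩
  -- closure of ext P under XOR with arbitrary z
  have hclos : ∀ p0 p1 : Fin d → Bool, (bv p0, bv p1) ∈ Set.extremePoints ℝ P →
      ∀ z : Fin d → Bool,
        (bv (bxor p0 z), bv (bxor p1 z)) ∈ Set.extremePoints ℝ P := by
    intro p0 p1 hp z
    have gen : ∀ s : Finset (Fin d),
        (bv (bxor p0 (fun i => decide (i ∈ s))),
         bv (bxor p1 (fun i => decide (i ∈ s)))) ∈ Set.extremePoints ℝ P := by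
      intro s
      induction s using Finset.induction_on with
      | empty =>
        have h0 : ∀ p : Fin d → Bool,
            bxor p (fun i => decide (i ∈ (∅ : Finset (Fin d)))) = p := by
          intro p; funext i; simp [bxor]
        rw [h0, h0]; exact hp
      | @insert j s' hi ih =>
        have h1 : ∀ p : Fin d → Bool,
            bxor p (fun i => decide (i ∈ insert j s')) =
              bxor (bxor p (fun i => decide (i ∈ s'))) (eb j) := by
          intro p; funext i
          simp only [bxor, eb, Finset.mem_insert]
          by_cases hij : i = j
          · subst hij; simp [hi]
          · simp [hij]
        rw [h1, h1]
        exact hpcs _ _ ih j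
    have hz : z = fun i => decide (i ∈ Finset.univ.filter (fun i => z i)) := by
      funext i; simp [Finset.mem_filter]
    rw [hz]; exact gen _
  -- Q is inside the cube
  have hQcube : ∀ x ∈ Q, ∀ i, 0 ≤ x i ∧ x i ≤ 1 := by
    intro x hx
    have hconv : Convex ℝ {y : Fin d → ℝ | ∀ i, 0 ≤ y i ∧ y i ≤ 1} := by
      intro y hy w hw a b ha hb hab i
      simp only [Pi.add_apply, Pi.smul_apply, smul_eq_mul]
      constructor <;> nlinarith [(hy i).1, (hy i).2, (hw i).1, (hw i).2]
    rw [hQ] at hx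
    refine convexHull_min ?_ hconv hx
    rintro y ⟨p0, p1, -, rfl⟩ i
    simp only [bv]
    split <;> norm_num
  -- the generating set of Q
  set G : Set (Fin d → ℝ) := {x | ∃ p0 p1 : Fin d → Bool,
      (bv p0, bv p1) ∈ Set.extremePoints ℝ P ∧ x = bv (bxor p0 p1)} with hG
  ext x
  simp only [Set.mem_iUnion, Set.mem_image, Set.mem_setOf_eq]
  constructor
  · intro hx
    obtain ⟨p0, p1, rfl⟩ := hPext x hx
    refine ⟨p1, bxor p0 p1, ?_, ?_⟩
    · -- bv (bxor p0 p1) ∈ ext Q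
      apply cube_extreme Q hQcube
      rw [hQ]
      exact subset_convexHull ℝ _ ⟨p0, p1, hx, rfl⟩
    · rw [bxor_cancel]
  · rintro ⟨z, q, hq, rfl⟩
    have hqG : bv q ∈ G := by
      rw [hQ] at hq
      exact extremePoints_convexHull_subset hq
    obtain ⟨p0, p1, hp, hbv⟩ := hqG
    have hqeq : q = bxor p0 p1 := bv_inj hbv
    have := hclos p0 p1 hp (bxor p1 z)
    rwa [← bxor_assoc, ← hqeq, bxor_self_right] at this
end
end

section
/- Let P ⊆ ℝ^{2d} be a full-dimensional pairwise centrally symmetric 0/1 polytope and Q its projection (convex hull of {p₀ ⊕ p₁ : (p₀,p₁) ∈ ext(P)}), also full-dimensional. If w·x ≤ c is a facet-defining inequality of Q with all entries of w nonnegative and at least two nonzero entries of w, then (w,−w)·(x₀,x₁) ≤ c is a facet-defining inequality of P. -/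
set_option maxHeartbeats 1000000
set_option synthInstance.maxHeartbeats 400000


noncomputable section

/-- Dot product on `ℝ^d`. -/
def dotp {d : ℕ} (w x : Fin d → ℝ) : ℝ := ∑ i, w i * x i

namespace Stmt3Aux

variable {d : ℕ}

lemma dotp_add (w a b : Fin d → ℝ) : dotp w (a + b) = dotp w a + dotp w b := by
  simp [dotp, mul_add, Finset.sum_add_distrib]

lemma dotp_smul (w : Fin d → ℝ) (c : ℝ) (a : Fin d → ℝ) : dotp w (c • a) = c * dotp w a := by
  simp only [dotp, Pi.smul_apply, smul_eq_mul, Finset.mul_sum]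
  exact Finset.sum_congr rfl fun i _ => by ring

lemma dotp_sub (w a b : Fin d → ℝ) : dotp w (a - b) = dotp w a - dotp w b := by
  simp [dotp, mul_sub, Finset.sum_sub_distrib]

lemma dotp_single (w : Fin d → ℝ) (j : Fin d) : dotp w (Pi.single j 1) = w j := by
  simp [dotp, Pi.single_apply, mul_ite, Finset.sum_ite_eq']

lemma isLinearMap_dot (w : Fin d → ℝ) : IsLinearMap ℝ (fun x : Fin d → ℝ => dotp w x) :=
  ⟨dotp_add w, fun c a => dotp_smul w c a⟩

lemma isLinearMap_phi (w : Fin d → ℝ) :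
    IsLinearMap ℝ (fun x : (Fin d → ℝ) × (Fin d → ℝ) => dotp w x.1 - dotp w x.2) := by
  constructor
  · intro x y; simp only [Prod.fst_add, Prod.snd_add, dotp_add]; ring
  · intro c x; simp only [Prod.smul_fst, Prod.smul_snd, dotp_smul, smul_eq_mul]; ring

/-- Flipping both sides by a mask preserves extremality. -/
lemma flip_mask (P : Set ((Fin d → ℝ) × (Fin d → ℝ)))
    (hpcs : ∀ p0 p1 : Fin d → Bool, (bv p0, bv p1) ∈ Set.extremePoints ℝ P →
      ∀ i : Fin d,
        (bv (bxor p0 (eb i)), bv (bxor p1 (eb i))) ∈ Set.extremePoints ℝ P)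
    (m : Fin d → Bool) (p0 p1 : Fin d → Bool)
    (h : (bv p0, bv p1) ∈ Set.extremePoints ℝ P) :
    (bv (bxor p0 m), bv (bxor p1 m)) ∈ Set.extremePoints ℝ P := by
  have key : ∀ s : Finset (Fin d), ∀ p0 p1 : Fin d → Bool,
      (bv p0, bv p1) ∈ Set.extremePoints ℝ P →
      (bv (bxor p0 (fun i => decide (i ∈ s))), bv (bxor p1 (fun i => decide (i ∈ s))))
        ∈ Set.extremePoints ℝ P := by
    intro s
    induction s using Finset.induction_on with
    | empty =>
        intro p0 p1 h
        have e : ∀ p : Fin d → Bool, (bxor p (fun i => decide (i ∈ (∅ : Finset (Fin d))))) = p := by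
          intro p; funext i; simp [bxor]
        rw [e, e]; exact h
    | @insert a s ha ih =>
        intro p0 p1 h
        have e : ∀ p : Fin d → Bool,
            (bxor p (fun i => decide (i ∈ insert a s)))
              = bxor (bxor p (fun i => decide (i ∈ s))) (eb a) := by
          intro p; funext i
          by_cases hia : i = a
          · subst hia; simp [bxor, eb, ha]
          · simp [bxor, eb, hia, Finset.mem_insert]
        rw [e, e]
        exact hpcs _ _ (ih p0 p1 h) a
  have hm : m = fun i => decide (i ∈ Finset.univ.filter (fun i => m i)) := by
    funext i; simp
  rw [hm]
  exact key _ p0 p1 h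

/-- Normalized lift: flip so that on xor-coordinates the first component is 1. -/
lemma lift_norm (P : Set ((Fin d → ℝ) × (Fin d → ℝ)))
    (hpcs : ∀ p0 p1 : Fin d → Bool, (bv p0, bv p1) ∈ Set.extremePoints ℝ P →
      ∀ i : Fin d,
        (bv (bxor p0 (eb i)), bv (bxor p1 (eb i))) ∈ Set.extremePoints ℝ P)
    (p0 p1 : Fin d → Bool) (h : (bv p0, bv p1) ∈ Set.extremePoints ℝ P) :
    ∃ q0 q1 : Fin d → Bool, (bv q0, bv q1) ∈ Set.extremePoints ℝ P ∧
      bxor q0 q1 = bxor p0 p1 ∧ bv q0 - bv q1 = bv (bxor p0 p1) := by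
  refine ⟨bxor p0 (fun i => !(p0 i) && p1 i), bxor p1 (fun i => !(p0 i) && p1 i),
    flip_mask P hpcs _ p0 p1 h, ?_, ?_⟩
  · funext i; cases hp : p0 i <;> cases hq : p1 i <;> simp [bxor, hp, hq]
  · funext i
    cases hp : p0 i <;> cases hq : p1 i <;>
      simp [bv, bxor, hp, hq, Pi.sub_apply]


lemma hull_ext {E : Type*} [NormedAddCommGroup E] [NormedSpace ℝ E]
    (s : Set E) (hcomp : IsCompact s) (hconv : Convex ℝ s)
    (hext : (Set.extremePoints ℝ s).Finite) :
    s = convexHull ℝ (Set.extremePoints ℝ s) := by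
  have h := closure_convexHull_extremePoints hcomp hconv
  conv_lhs => rw [← h]
  rw [(hext.isCompact_convexHull ℝ).isClosed.closure_eq]

lemma dotp_cont (w : Fin d → ℝ) : Continuous (fun x : Fin d → ℝ => dotp w x) := by
  unfold dotp
  exact continuous_finset_sum _ fun i _ => continuous_const.mul (continuous_apply i)

lemma face_extreme (Q : Set (Fin d → ℝ)) (w : Fin d → ℝ) (c : ℝ)
    (hvalid : ∀ x ∈ Q, dotp w x ≤ c) :
    IsExtreme ℝ Q {x ∈ Q | dotp w x = c} := by
  constructor
  · exact Set.sep_subset _ _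
  · rintro x1 hx1 x2 hx2 z ⟨hzQ, hzc⟩ hseg
    obtain ⟨a, b, ha, hb, hab, rfl⟩ := hseg
    have e1 : dotp w x1 ≤ c := hvalid _ hx1
    have e2 : dotp w x2 ≤ c := hvalid _ hx2
    have hz : a * dotp w x1 + b * dotp w x2 = c := by
      have := hzc
      rwa [dotp_add, dotp_smul, dotp_smul] at this
    have hsum : a * c + b * c = c := by rw [← add_mul, hab, one_mul]
    have hc1 : dotp w x1 = c := by
      by_contra hne
      have hlt : dotp w x1 < c := lt_of_le_of_ne e1 hne
      have h1 : a * dotp w x1 < a * c := mul_lt_mul_of_pos_left hlt ha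
      have h2 : b * dotp w x2 ≤ b * c := mul_le_mul_of_nonneg_left e2 hb.le
      linarith
    have hc2 : dotp w x2 = c := by
      by_contra hne
      have hlt : dotp w x2 < c := lt_of_le_of_ne e2 hne
      have h1 : b * dotp w x2 < b * c := mul_lt_mul_of_pos_left hlt hb
      have h2 : a * dotp w x1 ≤ a * c := mul_le_mul_of_nonneg_left e1 ha.le
      linarith
    exact ⟨hx1, hc1⟩

end Stmt3Aux

/-- Lifting facets: a non-negative, non-trivial facet-defining inequality
`w·x ≤ c` of the projected polytope `Q` lifts to the facet-defining inequality
`(w,−w)·(x₀,x₁) ≤ c` of the full-dimensional pairwise centrally symmetric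
0/1 polytope `P`.  Facet-defining means valid together with a maximal family
of affinely independent tight points. -/
theorem stmt3 (d : ℕ) (hd : 0 < d) (P : Set ((Fin d → ℝ) × (Fin d → ℝ)))
    (h01 : ∃ S : Set ((Fin d → Bool) × (Fin d → Bool)),
      P = convexHull ℝ ((fun s => (bv s.1, bv s.2)) '' S))
    (hpcs : ∀ p0 p1 : Fin d → Bool, (bv p0, bv p1) ∈ Set.extremePoints ℝ P →
      ∀ i : Fin d,
        (bv (bxor p0 (eb i)), bv (bxor p1 (eb i))) ∈ Set.extremePoints ℝ P)
    (hPfull : affineSpan ℝ P = ⊤)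
    (Q : Set (Fin d → ℝ))
    (hQ : Q = convexHull ℝ {x | ∃ p0 p1 : Fin d → Bool,
        (bv p0, bv p1) ∈ Set.extremePoints ℝ P ∧ x = bv (bxor p0 p1)})
    (hQfull : affineSpan ℝ Q = ⊤)
    (w : Fin d → ℝ) (c : ℝ)
    (hnn : ∀ i, 0 ≤ w i)
    (hnt : ∃ i j : Fin d, i ≠ j ∧ w i ≠ 0 ∧ w j ≠ 0)
    (hvalid : ∀ x ∈ Q, dotp w x ≤ c)
    (hfacet : ∃ f : Fin d → (Fin d → ℝ), AffineIndependent ℝ f ∧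
      ∀ m, f m ∈ Q ∧ dotp w (f m) = c) :
    (∀ x ∈ P, dotp w x.1 - dotp w x.2 ≤ c) ∧
      ∃ g : Fin (2 * d) → (Fin d → ℝ) × (Fin d → ℝ), AffineIndependent ℝ g ∧
        ∀ m, g m ∈ P ∧ dotp w (g m).1 - dotp w (g m).2 = c := by
  classical
  open Stmt3Aux in
  obtain ⟨S, hPS⟩ := h01
  obtain ⟨f, hfind, hfQ⟩ := hfacet
  set genQ : Set (Fin d → ℝ) := {x | ∃ p0 p1 : Fin d → Bool,
      (bv p0, bv p1) ∈ Set.extremePoints ℝ P ∧ x = bv (bxor p0 p1)} with hgenQ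
  have hgenQfin : genQ.Finite := by
    apply (Set.finite_range (fun v : Fin d → Bool => bv v)).subset
    rintro x ⟨p0, p1, -, rfl⟩
    exact ⟨bxor p0 p1, rfl⟩
  have hgenPfin : ((fun s : (Fin d → Bool) × (Fin d → Bool) => (bv s.1, bv s.2)) '' S).Finite :=
    (Set.toFinite S).image _
  have hPconv : Convex ℝ P := hPS ▸ convex_convexHull ℝ _
  have hQconv : Convex ℝ Q := hQ ▸ convex_convexHull ℝ _
  have hextP : Set.extremePoints ℝ P ⊆
      (fun s : (Fin d → Bool) × (Fin d → Bool) => (bv s.1, bv s.2)) '' S :=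
    hPS ▸ extremePoints_convexHull_subset
  have hPcomp : IsCompact P := hPS ▸ hgenPfin.isCompact_convexHull ℝ
  have hPeq : P = convexHull ℝ (Set.extremePoints ℝ P) :=
    Stmt3Aux.hull_ext P hPcomp hPconv (hgenPfin.subset hextP)
  -- validity on P
  have hvalP : ∀ x ∈ P, dotp w x.1 - dotp w x.2 ≤ c := by
    have hsub : P ⊆ {y : (Fin d → ℝ) × (Fin d → ℝ) | dotp w y.1 - dotp w y.2 ≤ c} := by
      rw [hPeq]
      refine convexHull_min ?_ (convex_halfSpace_le (Stmt3Aux.isLinearMap_phi w) c)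
      intro y hy
      obtain ⟨⟨p0, p1⟩, -, rfl⟩ := hextP hy
      have h2 : bv (bxor p0 p1) ∈ Q := by
        rw [hQ]; exact subset_convexHull ℝ _ ⟨p0, p1, hy, rfl⟩
      have h1 : dotp w (bv p0) - dotp w (bv p1) ≤ dotp w (bv (bxor p0 p1)) := by
        rw [← Stmt3Aux.dotp_sub w (bv p0) (bv p1)]
        unfold dotp
        apply Finset.sum_le_sum
        intro i _
        have hwi := hnn i
        cases hp : p0 i <;> cases hq : p1 i <;>
          simp [bv, bxor, hp, hq, Pi.sub_apply] <;> linarith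
      exact h1.trans (hvalid _ h2)
    exact fun x hx => hsub hx
  -- the face of Q
  set F : Set (Fin d → ℝ) := {x ∈ Q | dotp w x = c} with hF
  have hFext : IsExtreme ℝ Q F := Stmt3Aux.face_extreme Q w c hvalid
  have hextQsub : Set.extremePoints ℝ Q ⊆ genQ := hQ ▸ extremePoints_convexHull_subset
  have hextFsub : Set.extremePoints ℝ F ⊆ genQ :=
    fun x hx => hextQsub (hFext.extremePoints_subset_extremePoints hx)
  have hQcomp : IsCompact Q := hQ ▸ hgenQfin.isCompact_convexHull ℝ
  have hFcomp : IsCompact F :=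
    hQcomp.inter_right (isClosed_eq (Stmt3Aux.dotp_cont w) continuous_const)
  have hFconv : Convex ℝ F :=
    hQconv.inter (convex_hyperplane (Stmt3Aux.isLinearMap_dot w) c)
  have hFeq : F = convexHull ℝ (Set.extremePoints ℝ F) :=
    Stmt3Aux.hull_ext F hFcomp hFconv (hgenQfin.subset hextFsub)
  -- tight set of P
  set T : Set ((Fin d → ℝ) × (Fin d → ℝ)) :=
    {x ∈ P | dotp w x.1 - dotp w x.2 = c} with hT
  have hTconv : Convex ℝ T := hPconv.inter (convex_hyperplane (Stmt3Aux.isLinearMap_phi w) c)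
  -- lifting extreme points of F into T
  have hliftF : ∀ x ∈ Set.extremePoints ℝ F, ∃ z ∈ T, z.1 - z.2 = x := by
    intro x hx
    obtain ⟨p0, p1, hp, rfl⟩ := hextFsub hx
    obtain ⟨q0, q1, hq, hxor, hsubq⟩ := Stmt3Aux.lift_norm P hpcs p0 p1 hp
    have hxF : bv (bxor p0 p1) ∈ F := extremePoints_subset hx
    refine ⟨(bv q0, bv q1), ⟨extremePoints_subset hq, ?_⟩, hsubq⟩
    rw [← Stmt3Aux.dotp_sub, hsubq]
    exact hxF.2
  have hFsub : F ⊆ (fun z : (Fin d → ℝ) × (Fin d → ℝ) => z.1 - z.2) '' T := by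
    rw [hFeq]
    refine convexHull_min ?_ ?_
    · intro x hx
      obtain ⟨z, hz, hze⟩ := hliftF x hx
      exact ⟨z, hz, hze⟩
    · have himg := hTconv.linear_image
        ((LinearMap.fst ℝ (Fin d → ℝ) (Fin d → ℝ)) - (LinearMap.snd ℝ (Fin d → ℝ) (Fin d → ℝ)))
      have : ((LinearMap.fst ℝ (Fin d → ℝ) (Fin d → ℝ))
          - (LinearMap.snd ℝ (Fin d → ℝ) (Fin d → ℝ))) ''
          T = (fun z : (Fin d → ℝ) × (Fin d → ℝ) => z.1 - z.2) '' T := rfl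
      rwa [this] at himg
  have hxm : ∀ m, ∃ z, z ∈ T ∧ z.1 - z.2 = f m :=
    fun m => hFsub ⟨(hfQ m).1, (hfQ m).2⟩
  choose xm hxmT hxme using hxm
  -- for each coordinate there is a tight extreme pair agreeing at that coordinate
  have hker : ∀ i : Fin d, ∃ q0 q1 : Fin d → Bool,
      (bv q0, bv q1) ∈ Set.extremePoints ℝ P ∧ (bv q0, bv q1) ∈ T ∧ q0 i = q1 i := by
    intro i
    by_cases hall : ∀ x ∈ Set.extremePoints ℝ F, x i = 1
    · exfalso
      have hco : IsLinearMap ℝ (fun x : Fin d → ℝ => x i) := ⟨fun a b => rfl, fun c a => rfl⟩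
      have hF1 : ∀ x ∈ F, x i = 1 := by
        intro x hx
        have hs : F ⊆ {y : Fin d → ℝ | y i = 1} := by
          rw [hFeq]; exact convexHull_min hall (convex_hyperplane hco 1)
        exact hs hx
      set V := vectorSpan ℝ (Set.range f) with hV
      have hcard : Fintype.card (Fin d) = (d - 1) + 1 := by
        simp only [Fintype.card_fin]; omega
      have hVrank : Module.finrank ℝ V = d - 1 := hfind.finrank_vectorSpan hcard
      set pr : (Fin d → ℝ) →ₗ[ℝ] ℝ := LinearMap.proj i with hpr
      set dw : (Fin d → ℝ) →ₗ[ℝ] ℝ := (Stmt3Aux.isLinearMap_dot w).mk' _ with hdw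
      have hVle : V ≤ LinearMap.ker pr ⊓ LinearMap.ker dw := by
        rw [hV, vectorSpan_def]
        refine Submodule.span_le.2 ?_
        rintro v ⟨a, ha, b, hb, rfl⟩
        obtain ⟨ma, rfl⟩ := ha
        obtain ⟨mb, rfl⟩ := hb
        have hfa : f ma ∈ F := ⟨(hfQ ma).1, (hfQ ma).2⟩
        have hfb : f mb ∈ F := ⟨(hfQ mb).1, (hfQ mb).2⟩
        constructor
        · show pr (f ma -ᵥ f mb) = 0
          have : (f ma -ᵥ f mb) i = f ma i - f mb i := rfl
          show (f ma -ᵥ f mb) i = 0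
          rw [this, hF1 _ hfa, hF1 _ hfb, sub_self]
        · show dw (f ma -ᵥ f mb) = 0
          show dotp w (f ma -ᵥ f mb) = 0
          have : f ma -ᵥ f mb = f ma - f mb := rfl
          rw [this, Stmt3Aux.dotp_sub, (hfQ ma).2, (hfQ mb).2, sub_self]
      have hKpRank : Module.finrank ℝ (LinearMap.ker pr) = d - 1 := by
        have h1 := LinearMap.finrank_range_add_finrank_ker pr
        have h2 : LinearMap.range pr = ⊤ := by
          rw [LinearMap.range_eq_top]
          intro r; exact ⟨fun _ => r, rfl⟩
        rw [h2, finrank_top] at h1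
        have h3 : Module.finrank ℝ (Fin d → ℝ) = d := by
          rw [Module.finrank_pi]; simp
        have h4 : Module.finrank ℝ ℝ = 1 := Module.finrank_self ℝ
        rw [h3, h4] at h1
        omega
      have hVeq : V = LinearMap.ker pr :=
        Submodule.eq_of_le_of_finrank_le (hVle.trans inf_le_left) (by rw [hKpRank, hVrank])
      obtain ⟨i0, j0, hij, hwi0, hwj0⟩ := hnt
      obtain ⟨j, hji, hwj⟩ : ∃ j, j ≠ i ∧ w j ≠ 0 := by
        by_cases h : i0 = i
        · exact ⟨j0, fun hc => hij (h.trans hc.symm), hwj0⟩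
        · exact ⟨i0, h, hwi0⟩
      have hpj : (LinearMap.proj i : (Fin d → ℝ) →ₗ[ℝ] ℝ) (Pi.single j (1 : ℝ)) = 0 := by
        rw [LinearMap.proj_apply]
        exact Pi.single_eq_of_ne (fun hc => hji hc.symm) 1
      have hjV : Pi.single j (1 : ℝ) ∈ V := by
        rw [hVeq, LinearMap.mem_ker, hpr]
        exact hpj
      have hdw0 := (hVle hjV).2
      have : dotp w (Pi.single j (1 : ℝ)) = 0 := hdw0
      rw [Stmt3Aux.dotp_single] at this
      exact hwj this
    · push_neg at hall
      obtain ⟨x, hxext, hxi⟩ := hall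
      obtain ⟨p0, p1, hp, rfl⟩ := hextFsub hxext
      have hfalse : bxor p0 p1 i = false := by
        by_contra h
        rw [Bool.not_eq_false] at h
        exact hxi (by simp [bv, h])
      obtain ⟨q0, q1, hq, hxor, hsubq⟩ := Stmt3Aux.lift_norm P hpcs p0 p1 hp
      have hqi : q0 i = q1 i := by
        have hx := congrFun hxor i
        rw [hfalse] at hx
        have hx' : xor (q0 i) (q1 i) = false := hx
        cases h0 : q0 i <;> cases h1 : q1 i <;> rw [h0, h1] at hx' <;>
          first
          | rfl
          | exact absurd hx' (by decide)
      have hxF : bv (bxor p0 p1) ∈ F := extremePoints_subset hxext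
      exact ⟨q0, q1, hq, ⟨extremePoints_subset hq,
        by rw [← Stmt3Aux.dotp_sub, hsubq]; exact hxF.2⟩, hqi⟩
  -- kernel directions in the vector span of T
  have hsing : ∀ i : Fin d,
      ((Pi.single i 1, Pi.single i 1) : (Fin d → ℝ) × (Fin d → ℝ)) ∈ vectorSpan ℝ T := by
    intro i
    obtain ⟨q0, q1, hq, hqT, hqi⟩ := hker i
    set ε : ℝ := if q0 i then -1 else 1 with hε
    have hεne : ε ≠ 0 := by rw [hε]; split <;> norm_num
    have h1 : ∀ q : Fin d → Bool, q i = q0 i →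
        bv (bxor q (eb i)) - bv q = ε • (Pi.single i (1:ℝ) : Fin d → ℝ) := by
      intro q hqeq
      funext k
      by_cases hk : k = i
      · subst hk
        rw [Pi.sub_apply, Pi.smul_apply, Pi.single_eq_same, hε]
        cases h0 : q0 k <;> rw [h0] at hqeq <;>
          simp [bv, bxor, eb, hqeq, h0]
      · rw [Pi.sub_apply, Pi.smul_apply, Pi.single_eq_of_ne hk]
        have : eb i k = false := by simp [eb, hk]
        simp [bv, bxor, this]
    have hz1 := h1 q0 rfl
    have hz2 := h1 q1 hqi.symm
    set z' : (Fin d → ℝ) × (Fin d → ℝ) := (bv (bxor q0 (eb i)), bv (bxor q1 (eb i))) with hz'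
    have hdd : z'.1 - z'.2 = bv q0 - bv q1 := by
      have h12 : z'.1 - bv q0 = z'.2 - bv q1 := hz1.trans hz2.symm
      have := sub_eq_sub_iff_sub_eq_sub.mp h12
      linear_combination (norm := abel) this
    have hz'T : z' ∈ T := by
      refine ⟨extremePoints_subset (hpcs q0 q1 hq i), ?_⟩
      rw [← Stmt3Aux.dotp_sub, hdd, Stmt3Aux.dotp_sub]
      exact hqT.2
    have hmem : z' - (bv q0, bv q1) ∈ vectorSpan ℝ T := by
      have := vsub_mem_vectorSpan ℝ hz'T hqT
      simpa using this
    have heq : z' - (bv q0, bv q1) = ε • ((Pi.single i 1, Pi.single i 1) : (Fin d → ℝ) × (Fin d → ℝ)) := by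
      exact Prod.ext hz1 hz2
    have hrepr : ((Pi.single i 1, Pi.single i 1) : (Fin d → ℝ) × (Fin d → ℝ))
        = ε⁻¹ • (z' - (bv q0, bv q1)) := by
      rw [heq, smul_smul, inv_mul_cancel₀ hεne, one_smul]
    rw [hrepr]
    exact Submodule.smul_mem _ _ hmem
  -- rank of the tight set
  set D := vectorSpan ℝ T with hD
  set πL : ((Fin d → ℝ) × (Fin d → ℝ)) →ₗ[ℝ] (Fin d → ℝ) :=
    LinearMap.fst ℝ (Fin d → ℝ) (Fin d → ℝ) - LinearMap.snd ℝ (Fin d → ℝ) (Fin d → ℝ) with hπL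
  set ψ : D →ₗ[ℝ] (Fin d → ℝ) := πL.comp D.subtype with hψ
  have hrn := LinearMap.finrank_range_add_finrank_ker ψ
  have hcard : Fintype.card (Fin d) = (d - 1) + 1 := by
    simp only [Fintype.card_fin]; omega
  have h1 : d - 1 ≤ Module.finrank ℝ (LinearMap.range ψ) := by
    have hVle : vectorSpan ℝ (Set.range f) ≤ LinearMap.range ψ := by
      rw [vectorSpan_def]
      refine Submodule.span_le.2 ?_
      rintro v ⟨a, ha, b, hb, rfl⟩
      obtain ⟨ma, rfl⟩ := ha
      obtain ⟨mb, rfl⟩ := hb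
      have hmem : xm ma - xm mb ∈ D := by
        have := vsub_mem_vectorSpan ℝ (hxmT ma) (hxmT mb)
        simpa using this
      refine ⟨⟨xm ma - xm mb, hmem⟩, ?_⟩
      show πL (xm ma - xm mb) = f ma -ᵥ f mb
      rw [map_sub]
      have ea : πL (xm ma) = f ma := by rw [← hxme ma]; rfl
      have eb' : πL (xm mb) = f mb := by rw [← hxme mb]; rfl
      rw [ea, eb']; rfl
    calc d - 1 = Module.finrank ℝ (vectorSpan ℝ (Set.range f)) :=
          (hfind.finrank_vectorSpan hcard).symm
      _ ≤ _ := Submodule.finrank_mono hVle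
  have h2 : d ≤ Module.finrank ℝ (LinearMap.ker ψ) := by
    set β : Fin d → (Fin d → ℝ) × (Fin d → ℝ) := fun i => (Pi.single i 1, Pi.single i 1) with hβ
    have hβli : LinearIndependent ℝ β := by
      set J : (Fin d → ℝ) →ₗ[ℝ] (Fin d → ℝ) × (Fin d → ℝ) :=
        LinearMap.prod LinearMap.id LinearMap.id with hJ
      have hJker : LinearMap.ker J = ⊥ := by
        rw [LinearMap.ker_eq_bot']
        intro x hx
        have hxx : ((x, x) : (Fin d → ℝ) × (Fin d → ℝ)) = 0 := hx
        exact ((Prod.mk.injEq _ _ _ _).mp hxx).1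
      have hb := (Pi.basisFun ℝ (Fin d)).linearIndependent
      have hmap := hb.map' J hJker
      have hcomp : β = ⇑J ∘ ⇑(Pi.basisFun ℝ (Fin d)) := by
        funext i
        show β i = J ((Pi.basisFun ℝ (Fin d)) i)
        rw [Pi.basisFun_apply]
        rfl
      rw [hcomp]; exact hmap
    set K := Submodule.span ℝ (Set.range β) with hK
    have hKD : K ≤ D := Submodule.span_le.2 (by rintro _ ⟨i, rfl⟩; exact hsing i)
    have hKker : K ≤ LinearMap.ker πL := by
      refine Submodule.span_le.2 ?_
      rintro _ ⟨i, rfl⟩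
      show πL (β i) = 0
      show (β i).1 - (β i).2 = 0
      exact sub_self _
    have hKrank : Module.finrank ℝ K = d := by
      rw [hK, finrank_span_eq_card hβli, Fintype.card_fin]
    have hkerψ : LinearMap.ker ψ = Submodule.comap D.subtype (LinearMap.ker πL) :=
      LinearMap.ker_comp _ _
    have hle2 : Submodule.comap D.subtype K ≤ LinearMap.ker ψ := by
      rw [hkerψ]; exact Submodule.comap_mono hKker
    have heq2 : Module.finrank ℝ (Submodule.comap D.subtype K) = d :=
      (Submodule.comapSubtypeEquivOfLe hKD).finrank_eq.trans hKrank
    calc d = Module.finrank ℝ (Submodule.comap D.subtype K) := heq2.symm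
      _ ≤ _ := Submodule.finrank_mono hle2
  have hDrank : 2 * d - 1 ≤ Module.finrank ℝ D := by omega
  -- extract 2d affinely independent tight points
  obtain ⟨t, htT, htspan, htind⟩ := exists_affineIndependent ℝ _ T
  have htdir : vectorSpan ℝ t = D := by
    rw [hD, ← direction_affineSpan, htspan, direction_affineSpan]
  have htrank : 2 * d - 1 ≤ Module.finrank ℝ (vectorSpan ℝ t) := by
    rw [htdir]; exact hDrank
  obtain ⟨e⟩ : Nonempty (Fin (2 * d) ↪ t) := by
    by_cases hfin : t.Finite
    · haveI := hfin.fintype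
      have hne : t.Nonempty := by
        rcases Set.eq_empty_or_nonempty t with h | h
        · exfalso
          rw [h, vectorSpan_empty] at htrank
          simp only [finrank_bot] at htrank
          omega
        · exact h
      have hcardt : 2 * d ≤ Fintype.card t := by
        rcases hn : Fintype.card t with _ | n
        · exfalso
          obtain ⟨x, hx⟩ := hne
          exact (Fintype.card_eq_zero_iff.mp hn).false ⟨x, hx⟩
        · have hfr := htind.finrank_vectorSpan hn
          rw [Subtype.range_coe] at hfr
          omega
      exact ⟨(Fin.castLEEmb hcardt).trans (Fintype.equivFin t).symm.toEmbedding⟩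
    · haveI : Infinite t := Set.infinite_coe_iff.2 hfin
      exact ⟨(Fin.valEmbedding).trans (Infinite.natEmbedding t)⟩
  refine ⟨hvalP, fun m => ((e m : t) : (Fin d → ℝ) × (Fin d → ℝ)),
    htind.comp_embedding e, fun m => ?_⟩
  have hmem : ((e m : t) : (Fin d → ℝ) × (Fin d → ℝ)) ∈ T := htT (e m).2
  exact ⟨hmem.1, hmem.2⟩
end
end

section
/- The projection of the partial-order-correlations polytope P_n under the map (p₀,p₁) ↦ p₀ ⊕ p₁ has as its set of extreme points exactly the adjacency vectors of all directed acyclic graphs on n vertices: ext(Q_n) = {α(D) : D a DAG on vertex set [n]}. -/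
noncomputable section
noncomputable section

/-- Ordered pairs of distinct parties. -/
def Arc (n : ℕ) := {p : Fin n × Fin n // p.1 ≠ p.2}

instance (n : ℕ) : DecidableEq (Arc n) := by unfold Arc; infer_instance
instance (n : ℕ) : Fintype (Arc n) := by unfold Arc; infer_instance

/-- Coordinates of the single-output scenario: a pair (sender, receiver) of
distinct parties together with the input bit `x`. -/
def Idx (n : ℕ) := Arc n × Bool

instance (n : ℕ) : DecidableEq (Idx n) := by unfold Idx; infer_instance
instance (n : ℕ) : Fintype (Idx n) := by unfold Idx; infer_instance

/-- Deterministic single-output partial-order correlations: 0/1 vectors of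
`p(0|s,r,x)` such that, for some partial order `σ`, the output is independent
of `x` whenever the sender `s` does not precede the receiver `r`. -/
def detPO (n : ℕ) : Set (Idx n → ℝ) :=
  {v | (∀ i, v i = 0 ∨ v i = 1) ∧
    ∃ σ : Fin n → Fin n → Prop, IsPartialOrder (Fin n) σ ∧
      ∀ a : Arc n, ¬ σ a.1.1 a.1.2 → v (a, false) = v (a, true)}

/-- The `n`-party partial-order-correlations polytope `P_n ⊆ ℝ^{2n(n−1)}`. -/
def POpoly (n : ℕ) : Set (Idx n → ℝ) := convexHull ℝ (detPO n)

/-- A digraph (given by a Boolean arc relation) is a DAG if no arc can be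
closed into a directed cycle by a directed walk back. -/
def IsDAG {n : ℕ} (A : Fin n → Fin n → Bool) : Prop :=
  ∀ u v, A u v = true → ¬ Relation.ReflTransGen (fun x y => A x y = true) v u

/-- Adjacency vector of a simple digraph, indexed by ordered pairs of
distinct vertices. -/
def adj {n : ℕ} (A : Fin n → Fin n → Bool) : Arc n → ℝ :=
  fun a => if A a.1.1 a.1.2 then 1 else 0

/-- The projection `Q_n` of `P_n` under `(p₀,p₁) ↦ p₀ ⊕ p₁` (on 0/1 vectors,
XOR is the absolute difference). -/
def Qpoly (n : ℕ) : Set (Arc n → ℝ) :=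
  convexHull ℝ {q | ∃ v ∈ Set.extremePoints ℝ (POpoly n),
    ∀ a : Arc n, q a = |v (a, false) - v (a, true)|}

/-- 0/1 vectors in a set of 0/1 vectors are extreme points of the hull. -/
lemma cube_mem_extremePoints {ι : Type*} {s : Set (ι → ℝ)}
    (hs : ∀ w ∈ s, ∀ i, w i = 0 ∨ w i = 1) {v : ι → ℝ} (hv : v ∈ s) :
    v ∈ Set.extremePoints ℝ (convexHull ℝ s) := by
  have hcube : convexHull ℝ s ⊆ {w : ι → ℝ | ∀ i, 0 ≤ w i ∧ w i ≤ 1} := by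
    apply convexHull_min
    · intro w hw i
      rcases hs w hw i with h | h <;> simp [h]
    · have : Convex ℝ (Set.pi Set.univ (fun _ : ι => Set.Icc (0:ℝ) 1)) :=
        convex_pi (fun i _ => convex_Icc 0 1)
      convert this using 1
      ext w
      simp [Set.mem_pi, Set.mem_Icc, forall_and, Pi.le_def]
      ext w
      simp [Set.mem_pi, Set.mem_Icc, forall_and, Pi.le_def]
  rw [mem_extremePoints]
  refine ⟨subset_convexHull ℝ s hv, ?_⟩
  intro x₁ hx₁ x₂ hx₂ hseg
  obtain ⟨a, b, ha, hb, hab, heq⟩ := hseg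
  have h1 := hcube hx₁
  have h2 := hcube hx₂
  have key : x₁ = v ∧ x₂ = v := by
    constructor <;> [skip; skip] <;> funext i <;>
    · have hvi := hs v hv i
      have e : a * x₁ i + b * x₂ i = v i := congrFun heq i
      have c1 := h1 i
      have c2 := h2 i
      rcases hvi with h | h <;> rw [h] at e ⊢ <;> nlinarith [c1.1, c1.2, c2.1, c2.2]
  exact key

/-- The extreme points of the projected polytope `Q_n` are exactly the
adjacency vectors of the directed acyclic graphs on `n` vertices. -/
theorem stmt8 (n : ℕ) (hn : 2 ≤ n) :
    Set.extremePoints ℝ (Qpoly n) =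
      {q | ∃ A : Fin n → Fin n → Bool, IsDAG A ∧ q = adj A} := by
  classical
  -- the generating set of Qpoly equals the set of DAG adjacency vectors
  have hext_sub : Set.extremePoints ℝ (POpoly n) ⊆ detPO n :=
    extremePoints_convexHull_subset
  have hext_sup : detPO n ⊆ Set.extremePoints ℝ (POpoly n) := by
    intro v hv
    exact cube_mem_extremePoints (fun w hw => hw.1) hv
  have hSet : {q : Arc n → ℝ | ∃ v ∈ Set.extremePoints ℝ (POpoly n),
      ∀ a : Arc n, q a = |v (a, false) - v (a, true)|}
      = {q | ∃ A : Fin n → Fin n → Bool, IsDAG A ∧ q = adj A} := by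
    ext q
    constructor
    · rintro ⟨v, hv, hq⟩
      obtain ⟨h01, σ, hσ, hind⟩ := hext_sub hv
      set A : Fin n → Fin n → Bool := fun u w =>
        if h : u ≠ w then decide (v (⟨(u, w), h⟩, false) ≠ v (⟨(u, w), h⟩, true))
        else false with hA
      have hAimp : ∀ u w, A u w = true → u ≠ w ∧ σ u w := by
        intro u w huw
        by_cases h : u ≠ w
        · refine ⟨h, ?_⟩
          rw [hA] at huw
          simp only [dif_pos h, decide_eq_true_eq] at huw
          by_contra hσuw
          exact huw (hind ⟨(u, w), h⟩ hσuw)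
        · rw [hA] at huw; simp [h] at huw
      refine ⟨A, ?_, ?_⟩
      · have hgen : ∀ x y, Relation.ReflTransGen (fun a b => A a b = true) x y → σ x y := by
          intro x y h
          induction h with
          | refl => exact hσ.refl x
          | tail _ hlast ih => exact hσ.trans _ _ _ ih (hAimp _ _ hlast).2
        intro u w huw hcyc
        have h1 := hAimp u w huw
        exact h1.1 (hσ.antisymm _ _ h1.2 (hgen _ _ hcyc))
      · funext a
        obtain ⟨⟨u, w⟩, h⟩ := a
        rw [hq ⟨(u, w), h⟩]
        simp only [adj, hA]
        simp only [dif_pos h, decide_eq_true_eq]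
        rcases h01 (⟨⟨(u,w),h⟩, false⟩ : Idx n) with h0 | h0 <;>
          rcases h01 (⟨⟨(u,w),h⟩, true⟩ : Idx n) with h1 | h1 <;>
          · rw [h0, h1]
            norm_num
    · rintro ⟨A, hdag, rfl⟩
      set R : Fin n → Fin n → Prop := fun x y => A x y = true with hR
      set v : Idx n → ℝ := fun i => if A i.1.1.1 i.1.1.2 = true ∧ i.2 = true then 1 else 0
        with hv
      have hvdet : v ∈ detPO n := by
        refine ⟨fun i => by by_cases h : A i.1.1.1 i.1.1.2 = true ∧ i.2 = true <;>
          simp [hv, h], Relation.ReflTransGen R, ?_, ?_⟩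
        · refine { refl := fun a => Relation.ReflTransGen.refl,
                   trans := fun a b c h1 h2 => h1.trans h2,
                   antisymm := ?_ }
          intro a b hab hba
          rcases hab.cases_head with h | ⟨c, hac, hcb⟩
          · exact h
          · exact absurd (hcb.trans hba) (hdag a c hac)
        · intro a hna
          have : A a.1.1 a.1.2 ≠ true := fun h =>
            hna (Relation.ReflTransGen.single h)
          simp [hv, this]
      refine ⟨v, hext_sup hvdet, ?_⟩
      intro a
      by_cases h : A a.1.1 a.1.2 = true <;> simp [adj, hv, h]
  rw [Qpoly, hSet]
  apply Set.Subset.antisymm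
  · exact extremePoints_convexHull_subset
  · intro q hq
    refine cube_mem_extremePoints ?_ hq
    rintro w ⟨A, _, rfl⟩ a
    by_cases h : A a.1.1 a.1.2 = true <;> simp [adj, h]
end
end
end

section
/- For the k-fence digraph game played by n parties with single-output partial-order correlations, the winning probability is at most 1 − (k−1)/(2k²); equivalently, Σ over the k² arcs (s,r) and bits x of p(x|s,r,x) is at most k² + (k² − k + 1). -/
noncomputable section

/-- Single-output partial-order correlations: `p s r x a` is the probability
that the receiver `r` outputs `a` given that the sender `s` received the bit
`x`.  They decompose as a finite mixture over partial orders `σ i` of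
conditional distributions in which the output is independent of `x` whenever
the sender does not precede the receiver. -/
def IsPOCorr (n : ℕ) (p : Fin n → Fin n → Bool → Bool → ℝ) : Prop :=
  ∃ (m : ℕ) (μ : Fin m → ℝ) (σ : Fin m → Fin n → Fin n → Prop)
    (q : Fin m → Fin n → Fin n → Bool → Bool → ℝ),
    (∀ i, 0 ≤ μ i) ∧ (∑ i, μ i = 1) ∧
    (∀ i, IsPartialOrder (Fin n) (σ i)) ∧
    (∀ i s r x a, 0 ≤ q i s r x a) ∧
    (∀ i s r x, ∑ a, q i s r x a = 1) ∧
    (∀ i s r, ¬ σ i s r → ∀ a, q i s r false a = q i s r true a) ∧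
    (∀ s r x a, p s r x a = ∑ i, μ i * q i s r x a)

/-!
Each component of the mixture is a strategy for one partial order `σ`. On an arc `(s, r)` with
`s ⋠ r` the receiver's output ignores `x`, so it is correct for exactly one of the two bits on
average and the arc scores `1`; any arc scores at most `2`. Hence a component scores at most `k²`
plus the number of fence arcs inside `σ`. These arcs contain no 4-cycle `(0,i) → (1,i) → (0,j) →
(1,j) → (0,i)`, so each spike `(0,j) → (1,j)` beyond a first spike `(0,i) → (1,i)` excludes one of
the two cross arcs between `i` and `j`: at most `k² - k + 1` fence arcs lie in `σ` (the `k`-fence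
inequality). Averaging over the mixture gives the bound.
-/

open Finset

section FenceCount

variable {ι : Type*} [Fintype ι] [DecidableEq ι]

theorem card_filter_add_card_offDiag_filter_le (Q : ι → Prop) (P : ι → ι → Prop)
    [DecidablePred Q] [DecidableRel P]
    (h : ∀ a b, a ≠ b → Q a → Q b → P a b → ¬ P b a) :
    #{a | Q a} + #{x ∈ univ.offDiag | P x.1 x.2} ≤ #(univ : Finset ι).offDiag + 1 := by
  set S : Finset ι := {a | Q a}
  set C := {x ∈ (univ : Finset ι).offDiag | P x.1 x.2}
  have hC : C ⊆ univ.offDiag := filter_subset _ _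
  obtain hQ | ⟨a₀, ha₀⟩ := S.eq_empty_or_nonempty
  · rw [hQ, card_empty, zero_add]
    exact (card_le_card hC).trans (Nat.le_succ _)
  -- every further `Q`-point `a` leaves an arc between `a₀` and `a` outside `C`
  let g a := if P a₀ a then (a, a₀) else (a₀, a)
  have hQa₀ : Q a₀ := (mem_filter.1 ha₀).2
  have hmaps : Set.MapsTo g (S.erase a₀) (univ.offDiag \ C : Finset (ι × ι)) := by
    intro a ha
    obtain ⟨hQa, hne⟩ : Q a ∧ a ≠ a₀ := by simpa [S] using ha
    by_cases hP : P a₀ a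
    · simpa [g, C, hP, hne] using h a₀ a (Ne.symm hne) hQa₀ hQa hP
    · simp [g, C, hP, Ne.symm hne]
  have hinj : Set.InjOn g (S.erase a₀) := by
    intro a ha b hb hab
    simp only [coe_erase, Set.mem_sdiff, Set.mem_singleton_iff] at ha hb
    simp only [g] at hab
    split_ifs at hab <;> simp_all [Prod.ext_iff]
  have hcard := card_le_card_of_injOn g hmaps hinj
  rw [card_erase_of_mem ha₀, card_sdiff_of_subset hC] at hcard
  have := card_le_card hC
  have := card_pos.2 ⟨a₀, ha₀⟩
  omega

end FenceCount

theorem sum_diag_le_two {f : Bool → Bool → ℝ} (h0 : ∀ x a, 0 ≤ f x a)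
    (h1 : ∀ x, ∑ a, f x a = 1) : ∑ x, f x x ≤ 2 := by
  have hle (x : Bool) : f x x ≤ 1 :=
    h1 x ▸ single_le_sum (fun a _ => h0 x a) (mem_univ x)
  rw [Fintype.sum_bool]
  linarith [hle true, hle false]

theorem sum_diag_eq_one {f : Bool → Bool → ℝ} (h1 : ∀ x, ∑ a, f x a = 1)
    (hf : f false = f true) : ∑ x, f x x = 1 := by
  simpa [Fintype.sum_bool, hf, add_comm] using h1 true

section Fence

variable {ι : Type*} {k : ℕ} (w : Bool → Fin k → ι)

def fenceSum : (ι → ι → ℝ) →ₗ[ℝ] ℝ where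
  toFun g := ∑ i, g (w false i) (w true i) + ∑ x ∈ univ.offDiag, g (w true x.1) (w false x.2)
  map_add' g h := by simp only [Pi.add_apply, sum_add_distrib]; ring
  map_smul' c g := by simp [mul_sum, mul_add]

theorem fenceSum_eq_sum_ite (g : ι → ι → ℝ) :
    fenceSum w g = ∑ i, g (w false i) (w true i) +
      ∑ i, ∑ j, if i = j then 0 else g (w true i) (w false j) := by
  have hoff : (univ : Finset (Fin k)).offDiag = ({x | x.1 ≠ x.2} : Finset (Fin k × Fin k)) := by
    ext; simp
  rw [fenceSum, LinearMap.coe_mk, AddHom.coe_mk, hoff, sum_filter, ← univ_product_univ,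
    sum_product]
  simp only [ite_not]

theorem fenceSum_mono {g h : ι → ι → ℝ} (hgh : ∀ s r, g s r ≤ h s r) :
    fenceSum w g ≤ fenceSum w h :=
  add_le_add (sum_le_sum fun _ _ => hgh _ _) (sum_le_sum fun _ _ => hgh _ _)

theorem fenceSum_one : fenceSum w 1 = (k : ℝ) ^ 2 := by
  simp only [fenceSum, LinearMap.coe_mk, AddHom.coe_mk, Pi.one_apply, sum_const, card_univ,
    Fintype.card_fin, offDiag_card, nsmul_eq_mul, mul_one, Nat.cast_sub (Nat.le_mul_self k)]
  push_cast
  ring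

-- the `k`-fence inequality of Grötschel–Jünger–Reinelt
theorem fenceSum_ite_le (hw : Function.Injective fun q : Bool × Fin k => w q.1 q.2)
    (σ : ι → ι → Prop) [IsPartialOrder ι σ] [DecidableRel σ] :
    fenceSum w (fun s r => if σ s r then 1 else 0) ≤ (k : ℝ) ^ 2 - k + 1 := by
  have hcycle : ∀ a b, a ≠ b → σ (w false a) (w true a) → σ (w false b) (w true b) →
      σ (w true a) (w false b) → ¬ σ (w true b) (w false a) := fun a b hab ha hb hab' hba' =>
    hab (congrArg Prod.snd (hw (a₁ := (false, a)) (a₂ := (false, b))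
      (antisymm (_root_.trans ha hab') (_root_.trans hb hba'))))
  have hcount := card_filter_add_card_offDiag_filter_le _ _ hcycle
  simp only [fenceSum, LinearMap.coe_mk, AddHom.coe_mk, sum_boole]
  rw [offDiag_card, card_univ, Fintype.card_fin] at hcount
  have hcast := (Nat.cast_le (α := ℝ)).2 hcount
  push_cast [Nat.cast_sub (Nat.le_mul_self k)] at hcast
  linarith

theorem fenceSum_le_of_isPartialOrder (hw : Function.Injective fun q : Bool × Fin k => w q.1 q.2)
    (σ : ι → ι → Prop) [IsPartialOrder ι σ] (q : ι → ι → Bool → Bool → ℝ)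
    (h0 : ∀ s r x a, 0 ≤ q s r x a) (h1 : ∀ s r x, ∑ a, q s r x a = 1)
    (hσ : ∀ s r, ¬ σ s r → ∀ a, q s r false a = q s r true a) :
    fenceSum w (fun s r => ∑ x, q s r x x) ≤ (k : ℝ) ^ 2 + ((k : ℝ) ^ 2 - k + 1) := by
  classical
  have harc (s r : ι) : ∑ x, q s r x x ≤ 1 + if σ s r then 1 else 0 := by
    split_ifs with h
    · linarith [sum_diag_le_two (h0 s r) (h1 s r)]
    · linarith [sum_diag_eq_one (h1 s r) (funext (hσ s r h))]
  calc fenceSum w (fun s r => ∑ x, q s r x x)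
      ≤ fenceSum w (1 + fun s r => if σ s r then 1 else 0) := fenceSum_mono w harc
    _ ≤ (k : ℝ) ^ 2 + ((k : ℝ) ^ 2 - k + 1) := by
      rw [map_add, fenceSum_one]
      linarith [fenceSum_ite_le w hw σ]

end Fence

theorem IsPOCorr.fenceSum_le {n k : ℕ} {p : Fin n → Fin n → Bool → Bool → ℝ} (hp : IsPOCorr n p)
    {w : Bool → Fin k → Fin n} (hw : Function.Injective fun q : Bool × Fin k => w q.1 q.2) :
    fenceSum w (fun s r => ∑ x, p s r x x) ≤ (k : ℝ) ^ 2 + ((k : ℝ) ^ 2 - k + 1) := by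
  obtain ⟨m, μ, σ, q, hμ0, hμ1, hσ, hq0, hq1, hq, hp⟩ := hp
  have hmix : (fun s r => ∑ x, p s r x x) = ∑ i, μ i • fun s r => ∑ x, q i s r x x := by
    ext s r
    simp only [hp, Finset.sum_apply, Pi.smul_apply, smul_eq_mul, mul_sum]
    exact sum_comm
  rw [hmix, map_sum]
  calc ∑ i, fenceSum w (μ i • fun s r => ∑ x, q i s r x x)
      = ∑ i, μ i * fenceSum w (fun s r => ∑ x, q i s r x x) := by simp only [map_smul, smul_eq_mul]
    _ ≤ ∑ i, μ i * ((k : ℝ) ^ 2 + ((k : ℝ) ^ 2 - k + 1)) := by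
      refine sum_le_sum fun i _ => mul_le_mul_of_nonneg_left ?_ (hμ0 i)
      have := hσ i
      exact fenceSum_le_of_isPartialOrder w hw (σ i) (q i) (hq0 i) (hq1 i) (hq i)
    _ = (k : ℝ) ^ 2 + ((k : ℝ) ^ 2 - k + 1) := by rw [← sum_mul, hμ1, one_mul]

theorem stmt13_general (n k : ℕ)
    (p : Fin n → Fin n → Bool → Bool → ℝ) (hp : IsPOCorr n p)
    (w : Bool → Fin k → Fin n)
    (hw : Function.Injective fun q : Bool × Fin k => w q.1 q.2) :
    (1 / (2 * (k : ℝ) ^ 2)) *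
        ((∑ i : Fin k, ∑ x : Bool, p (w false i) (w true i) x x) +
          ∑ i : Fin k, ∑ j : Fin k,
            if i = j then 0 else ∑ x : Bool, p (w true i) (w false j) x x)
      ≤ 1 - ((k : ℝ) - 1) / (2 * (k : ℝ) ^ 2) := by
  have hbound := hp.fenceSum_le hw
  rw [fenceSum_eq_sum_ite] at hbound
  calc _ ≤ (2 * (k : ℝ) ^ 2 - (k - 1)) / (2 * (k : ℝ) ^ 2) := by
        rw [one_div_mul_eq_div]
        gcongr
        linarith
    _ = 2 * (k : ℝ) ^ 2 / (2 * (k : ℝ) ^ 2) - (k - 1) / (2 * (k : ℝ) ^ 2) := sub_div _ _ _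
    _ ≤ 1 - ((k : ℝ) - 1) / (2 * (k : ℝ) ^ 2) := by
      gcongr
      exact div_self_le_one _

/-- The `k`-fence game bound: for single-output partial-order correlations,
the winning probability of the `k`-fence digraph game is at most
`1 − (k−1)/(2k²)`.  The `k`-fence digraph on the `2k` parties
`w b i` (`b : Bool`, `i : Fin k`) has the `k²` arcs
`(w false i, w true i)` and `(w true i, w false j)` for `i ≠ j`;
the referee picks an arc and a bit uniformly. -/
theorem stmt13 (n k : ℕ) (hk : 2 ≤ k)
    (p : Fin n → Fin n → Bool → Bool → ℝ) (hp : IsPOCorr n p)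
    (w : Bool → Fin k → Fin n)
    (hw : Function.Injective fun q : Bool × Fin k => w q.1 q.2) :
    (1 / (2 * (k : ℝ) ^ 2)) *
        ((∑ i : Fin k, ∑ x : Bool, p (w false i) (w true i) x x) +
          ∑ i : Fin k, ∑ j : Fin k,
            if i = j then 0 else ∑ x : Bool, p (w true i) (w false j) x x)
      ≤ 1 - ((k : ℝ) - 1) / (2 * (k : ℝ) ^ 2) :=
  stmt13_general n k p hp w hw
end
end

section
/- For the k-Möbius digraph game (k odd, k ≥ 3) played by n parties with single-output partial-order correlations, the winning probability is at most 1 − (k+1)/(12k) ≤ 11/12; in particular, for each odd k the bound equals (1/2) + (5k−1)/(12k) and is strictly less than 11/12, approaching 11/12 as k → ∞. -/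
/-!
Fix one partial order `σ` of the mixture. On an arc `(s, r)` with `s` not below `r` the
receiver's output does not depend on the sender's bit, so the two bits together are guessed with
total probability at most `1` instead of `2`. The `k` squares of the Möbius ladder (columns `j`
and `j + 1`, cyclically, the last one through the twist) are directed `4`-cycles, so `σ`, pulled
back along the injective labelling, misses an arc in each square. An arc lies in at most two
squares, hence `σ` misses at least `(k + 1) / 2` of the `3k` arcs, and averaging over the mixture
bounds the total by `2 · 3k - (k + 1) / 2 = (11k - 1) / 2`.
-/

noncomputable section

/-- Index offset `i + γ·c` used in the definition of the Möbius digraph,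
where `γ : Bool` encodes the sign `±1` and `c : Bool` a bit. -/
def off (i : ℕ) (γ : Bool) (c : Bool) : ℕ :=
  if c then (if γ then i + 1 else i - 1) else i

/-- The arc relation of the `k`-Möbius digraph on the vertex set
`Bool × Fin k`: for each odd `i < k`, the arcs
`((x, i+γy), (y, i+γ(¬x)))` over `x y : Bool`, `γ = ±1`, together with the
two crossing arcs `((1,0),(0,k−1))` and `((1,k−1),(0,0))`. -/
def MobArc (k : ℕ) (a b : Bool × Fin k) : Prop :=
  (∃ i : ℕ, i < k ∧ i % 2 = 1 ∧ ∃ γ : Bool,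
      (a.2 : ℕ) = off i γ b.1 ∧ (b.2 : ℕ) = off i γ (!a.1)) ∨
  (a.1 = true ∧ (a.2 : ℕ) = 0 ∧ b.1 = false ∧ (b.2 : ℕ) = k - 1) ∨
  (a.1 = true ∧ (a.2 : ℕ) = k - 1 ∧ b.1 = false ∧ (b.2 : ℕ) = 0)

open Finset Function
open scoped Classical

lemma sum_diag_le_two_sub {q : Bool → Bool → ℝ} (hq0 : ∀ x a, 0 ≤ q x a)
    (hq1 : ∀ x, ∑ a, q x a = 1) (P : Prop) [Decidable P]
    (hP : P → ∀ a, q false a = q true a) :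
    ∑ x, q x x ≤ 2 - if P then 1 else 0 := by
  have h0 := hq1 false
  have h1 := hq1 true
  simp only [Fintype.sum_bool] at h0 h1 ⊢
  split_ifs with h
  · linarith [hP h true, hq0 false true]
  · linarith [hq0 true false, hq0 false true]

theorem IsPOCorr.sum_win_le {n : ℕ} {p : Fin n → Fin n → Bool → Bool → ℝ} (hp : IsPOCorr n p)
    {V : Type*} {w : V → Fin n} (hw : Injective w) (A : Finset (V × V)) {c : ℝ}
    (hc : ∀ τ : V → V → Prop, IsPartialOrder V τ → c ≤ #{e ∈ A | ¬τ e.1 e.2}) :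
    ∑ e ∈ A, ∑ x, p (w e.1) (w e.2) x x ≤ 2 * #A - c := by
  obtain ⟨m, μ, σ, q, hμ0, hμ1, hσ, hq0, hq1, hindep, hpq⟩ := hp
  have hcomp (i : Fin m) : ∑ e ∈ A, ∑ x, q i (w e.1) (w e.2) x x ≤ 2 * #A - c := by
    have hτ : IsPartialOrder V fun a b => σ i (w a) (w b) :=
      haveI := hσ i
      { Order.Preimage.instIsPreorder, Order.Preimage.antisymm hw with }
    calc ∑ e ∈ A, ∑ x, q i (w e.1) (w e.2) x x
        ≤ ∑ e ∈ A, (2 - if ¬σ i (w e.1) (w e.2) then 1 else 0) :=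
          sum_le_sum fun e _ => sum_diag_le_two_sub (hq0 i _ _) (hq1 i _ _) _ (hindep i _ _)
      _ = 2 * #A - #{e ∈ A | ¬σ i (w e.1) (w e.2)} := by
          rw [sum_sub_distrib, sum_const, sum_boole, nsmul_eq_mul, mul_comm]
      _ ≤ 2 * #A - c := by linarith [hc _ hτ]
  calc ∑ e ∈ A, ∑ x, p (w e.1) (w e.2) x x
      = ∑ i, μ i * ∑ e ∈ A, ∑ x, q i (w e.1) (w e.2) x x := by
        simp only [hpq, mul_sum]
        exact (sum_congr rfl fun _ _ => sum_comm).trans sum_comm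
    _ ≤ ∑ i, μ i * (2 * #A - c) := by gcongr with i; exacts [hμ0 i, hcomp i]
    _ = 2 * #A - c := by rw [← sum_mul, hμ1, one_mul]

section Mobius

variable {k : ℕ}

section Characterization

variable {c d : Fin k}

lemma mobArc_false_true_iff (hk : 2 ≤ k) :
    MobArc k (false, c) (true, d) ↔ (c : ℕ) = d ∧ (c : ℕ) % 2 = 0 := by
  simp only [MobArc]
  constructor
  · rintro (⟨i, -, hio, γ, hc, hd⟩ | ⟨h, -⟩ | ⟨h, -⟩)
    · cases γ <;> simp [off] at hc hd <;> omega
    all_goals simp at h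
  · rintro ⟨hcd, hc⟩
    rcases Nat.eq_zero_or_pos (c : ℕ) with hc0 | hpos
    · exact Or.inl ⟨1, by omega, rfl, false, by simp [off]; omega, by simp [off]; omega⟩
    · exact Or.inl ⟨c - 1, by omega, by omega, true, by simp [off]; omega,
        by simp [off]; omega⟩

lemma mobArc_true_false_iff :
    MobArc k (true, c) (false, d) ↔ (c : ℕ) = d ∧ (c : ℕ) % 2 = 1 ∨
      (c : ℕ) = 0 ∧ (d : ℕ) + 1 = k ∨ (c : ℕ) + 1 = k ∧ (d : ℕ) = 0 := by
  have := d.isLt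
  simp only [MobArc]
  constructor
  · rintro (⟨i, -, hio, γ, hc, hd⟩ | ⟨-, hc, -, hd⟩ | ⟨-, hc, -, hd⟩)
    · cases γ <;> simp [off] at hc hd <;> omega
    all_goals omega
  · rintro (⟨hcd, hc⟩ | ⟨hc, hd⟩ | ⟨hc, hd⟩)
    · exact Or.inl ⟨c, c.isLt, hc, true, by simp [off], by simp [off]; omega⟩
    · exact Or.inr <| Or.inl ⟨trivial, hc, trivial, by omega⟩
    · exact Or.inr <| Or.inr ⟨trivial, by omega, trivial, hd⟩

lemma mobArc_false_false_iff :
    MobArc k (false, c) (false, d) ↔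
      (c : ℕ) % 2 = 1 ∧ ((d : ℕ) = c + 1 ∨ (d : ℕ) + 1 = c) := by
  simp only [MobArc]
  constructor
  · rintro (⟨i, -, hio, γ, hc, hd⟩ | ⟨h, -⟩ | ⟨h, -⟩)
    · cases γ <;> simp [off] at hc hd <;> omega
    all_goals simp at h
  · rintro ⟨hc, hcd | hcd⟩
    · exact Or.inl ⟨c, c.isLt, hc, true, by simp [off], by simp [off, hcd]⟩
    · exact Or.inl ⟨c, c.isLt, hc, false, by simp [off], by simp [off]; omega⟩

lemma mobArc_true_true_iff :
    MobArc k (true, c) (true, d) ↔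
      (d : ℕ) % 2 = 1 ∧ ((c : ℕ) = d + 1 ∨ (c : ℕ) + 1 = d) := by
  simp only [MobArc]
  constructor
  · rintro (⟨i, -, hio, γ, hc, hd⟩ | ⟨-, -, h, -⟩ | ⟨-, -, h, -⟩)
    · cases γ <;> simp [off] at hc hd <;> omega
    all_goals simp at h
  · rintro ⟨hd, hcd | hcd⟩
    · exact Or.inl ⟨d, d.isLt, hd, true, by simp [off, hcd], by simp [off]⟩
    · exact Or.inl ⟨d, d.isLt, hd, false, by simp [off]; omega, by simp [off]⟩

end Characterization

variable [NeZero k]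

lemma Fin.val_add_one_of_eq {j : Fin k} (h : (j : ℕ) + 1 = k) :
    ((j + 1 : Fin k) : ℕ) = 0 := by
  rw [Fin.val_add, Fin.val_one', Nat.add_mod_mod, h, Nat.mod_self]

/- The rungs and the two rails of the Möbius ladder, each oriented alternately; at `j = k - 1`
the rails pass through the twist of the band and give the two crossing arcs. -/
def mobRung (j : Fin k) : (Bool × Fin k) × (Bool × Fin k) :=
  if (j : ℕ) % 2 = 0 then ((false, j), (true, j)) else ((true, j), (false, j))

def mobRailFalse (j : Fin k) : (Bool × Fin k) × (Bool × Fin k) :=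
  if (j : ℕ) + 1 = k then ((true, j + 1), (false, j))
  else if (j : ℕ) % 2 = 1 then ((false, j), (false, j + 1)) else ((false, j + 1), (false, j))

def mobRailTrue (j : Fin k) : (Bool × Fin k) × (Bool × Fin k) :=
  if (j : ℕ) + 1 = k then ((true, j), (false, j + 1))
  else if (j : ℕ) % 2 = 1 then ((true, j + 1), (true, j)) else ((true, j), (true, j + 1))

lemma exists_eq_mobRung_or_mobRail (hk : 2 ≤ k) {a b : Bool × Fin k} (h : MobArc k a b) :
    ∃ j, (a, b) = mobRung j ∨ (a, b) = mobRailFalse j ∨ (a, b) = mobRailTrue j := by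
  obtain ⟨x, c⟩ := a
  obtain ⟨y, d⟩ := b
  have hc := c.isLt
  have hd := d.isLt
  have add_one_eq {i i' : Fin k} (h : (i : ℕ) + 1 = i') : i + 1 = i' :=
    Fin.ext (by rw [Fin.val_add_one_of_lt' (by omega), h])
  have add_one_eq_zero {i i' : Fin k} (h : (i : ℕ) + 1 = k) (h' : (i' : ℕ) = 0) : i + 1 = i' :=
    Fin.ext (by rw [Fin.val_add_one_of_eq h, h'])
  cases x <;> cases y
  · obtain ⟨hc2, hcd | hcd⟩ := mobArc_false_false_iff.1 h
    · refine ⟨c, Or.inr <| Or.inl ?_⟩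
      rw [mobRailFalse, if_neg (by omega), if_pos hc2, add_one_eq hcd.symm]
    · refine ⟨d, Or.inr <| Or.inl ?_⟩
      rw [mobRailFalse, if_neg (by omega), if_neg (by omega), add_one_eq hcd]
  · obtain ⟨hcd, hc2⟩ := (mobArc_false_true_iff hk).1 h
    obtain rfl := Fin.ext hcd
    exact ⟨c, Or.inl <| by simp [mobRung, hc2]⟩
  · obtain ⟨hcd, hc2⟩ | ⟨hc0, hdk⟩ | ⟨hck, hd0⟩ := mobArc_true_false_iff.1 h
    · obtain rfl := Fin.ext hcd
      exact ⟨c, Or.inl <| by simp [mobRung, hc2]⟩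
    · exact ⟨d, Or.inr <| Or.inl <| by simp [mobRailFalse, hdk, add_one_eq_zero hdk hc0]⟩
    · exact ⟨c, Or.inr <| Or.inr <| by simp [mobRailTrue, hck, add_one_eq_zero hck hd0]⟩
  · obtain ⟨hd2, hcd | hcd⟩ := mobArc_true_true_iff.1 h
    · refine ⟨d, Or.inr <| Or.inr ?_⟩
      rw [mobRailTrue, if_neg (by omega), if_pos hd2, add_one_eq hcd.symm]
    · refine ⟨c, Or.inr <| Or.inr ?_⟩
      rw [mobRailTrue, if_neg (by omega), if_neg (by omega), add_one_eq hcd]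

lemma card_mobArc_le (hk : 2 ≤ k) :
    #{e : (Bool × Fin k) × (Bool × Fin k) | MobArc k e.1 e.2} ≤ 3 * k := by
  calc #{e : (Bool × Fin k) × (Bool × Fin k) | MobArc k e.1 e.2}
      ≤ #(univ.biUnion fun j : Fin k => {mobRung j, mobRailFalse j, mobRailTrue j}) := by
        refine card_le_card fun e he => ?_
        obtain ⟨j, hj⟩ := exists_eq_mobRung_or_mobRail hk (mem_filter.1 he).2
        exact mem_biUnion.2 ⟨j, mem_univ j, by simpa using hj⟩
    _ ≤ ∑ j : Fin k, #{mobRung j, mobRailFalse j, mobRailTrue j} := card_biUnion_le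
    _ ≤ ∑ _j : Fin k, 3 := sum_le_sum fun j _ => card_le_three
    _ = 3 * k := by simp [mul_comm]

lemma exists_mobArc_cycle (hk : 3 ≤ k) (hodd : k % 2 = 1) (j : Fin k) :
    ∃ a b c d : Bool × Fin k, a ≠ c ∧
      MobArc k a b ∧ MobArc k b c ∧ MobArc k c d ∧ MobArc k d a ∧
      ∀ v ∈ [a, b, c, d], v.2 = j ∨ v.2 = j + 1 := by
  have hj := j.isLt
  by_cases hlast : (j : ℕ) + 1 = k
  · have h1 := Fin.val_add_one_of_eq hlast
    refine ⟨(true, j + 1), (false, j), (true, j), (false, j + 1), ?_, ?_, ?_, ?_, ?_, by simp⟩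
    · simp [Fin.ext_iff]
      omega
    all_goals simp [mobArc_false_true_iff (by omega : 2 ≤ k), mobArc_true_false_iff, h1]
    all_goals omega
  · have h1 : ((j + 1 : Fin k) : ℕ) = j + 1 := Fin.val_add_one_of_lt' (by omega)
    rcases Nat.mod_two_eq_zero_or_one j with hpar | hpar
    · refine ⟨(false, j + 1), (false, j), (true, j), (true, j + 1), by simp, ?_, ?_, ?_, ?_,
        by simp⟩
      all_goals simp [mobArc_false_false_iff, mobArc_false_true_iff (by omega : 2 ≤ k),
        mobArc_true_true_iff, mobArc_true_false_iff, h1]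
      all_goals omega
    · refine ⟨(false, j), (false, j + 1), (true, j + 1), (true, j), by simp, ?_, ?_, ?_, ?_,
        by simp⟩
      all_goals simp [mobArc_false_false_iff, mobArc_false_true_iff (by omega : 2 ≤ k),
        mobArc_true_true_iff, mobArc_true_false_iff, h1]
      all_goals omega

lemma exists_mobArc_not_rel (hk : 3 ≤ k) (hodd : k % 2 = 1)
    (τ : Bool × Fin k → Bool × Fin k → Prop) [IsPartialOrder _ τ] (j : Fin k) :
    ∃ e : (Bool × Fin k) × (Bool × Fin k),
      MobArc k e.1 e.2 ∧ (e.1.2 = j ∨ e.1.2 = j + 1) ∧ ¬τ e.1 e.2 := by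
  obtain ⟨a, b, c, d, hac, hab, hbc, hcd, hda, hcol⟩ := exists_mobArc_cycle hk hodd j
  by_contra! h
  have hτ {u v} (huv : MobArc k u v) (hu : u ∈ [a, b, c, d]) : τ u v := h (u, v) huv (hcol u hu)
  exact hac <| antisymm_of τ (trans_of τ (hτ hab (by simp)) (hτ hbc (by simp)))
    (trans_of τ (hτ hcd (by simp)) (hτ hda (by simp)))

lemma le_two_mul_card_mobArc_not_rel (hk : 3 ≤ k) (hodd : k % 2 = 1)
    (τ : Bool × Fin k → Bool × Fin k → Prop) [IsPartialOrder _ τ] :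
    k + 1 ≤ 2 * #{e : (Bool × Fin k) × (Bool × Fin k) | MobArc k e.1 e.2 ∧ ¬τ e.1 e.2} := by
  have h := card_mul_le_card_mul (fun (j : Fin k) (e : (Bool × Fin k) × (Bool × Fin k)) =>
      e.1.2 = j ∨ e.1.2 = j + 1) (s := univ) (m := 1) (n := 2)
    (t := {e : (Bool × Fin k) × (Bool × Fin k) | MobArc k e.1 e.2 ∧ ¬τ e.1 e.2})
    (fun j _ => by
      obtain ⟨e, he, hcol, hτ⟩ := exists_mobArc_not_rel hk hodd τ j
      exact card_pos.2 ⟨e, (mem_bipartiteAbove _).2 ⟨by simp [he, hτ], hcol⟩⟩)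
    (fun e _ => by
      refine (card_le_card fun j hj => ?_).trans (card_le_two (a := e.1.2) (b := e.1.2 - 1))
      rcases ((mem_bipartiteBelow _).1 hj).2 with h | h <;> simp [h])
  simp only [card_univ, Fintype.card_fin, mul_one] at h
  omega

end Mobius

open scoped Classical in
/-- The `k`-Möbius game bound (`k` odd, `k ≥ 3`): with single-output
partial-order correlations, the winning probability of the game on the
`3k`-arc Möbius digraph (uniform arc and uniform bit) is at most
`1 − (k+1)/(12k)`; this bound equals `1/2 + (5k−1)/(12k)` and is strictly
below `11/12`. -/
theorem stmt14 (n k : ℕ) (hk : 3 ≤ k) (hodd : k % 2 = 1)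
    (p : Fin n → Fin n → Bool → Bool → ℝ) (hp : IsPOCorr n p)
    (w : Bool → Fin k → Fin n)
    (hw : Function.Injective fun q : Bool × Fin k => w q.1 q.2) :
    ((1 / (6 * (k : ℝ))) *
        ∑ a : Bool × Fin k, ∑ b : Bool × Fin k,
          (if MobArc k a b then ∑ x : Bool, p (w a.1 a.2) (w b.1 b.2) x x
            else 0)
      ≤ 1 - ((k : ℝ) + 1) / (12 * (k : ℝ))) ∧
    1 - ((k : ℝ) + 1) / (12 * (k : ℝ))
      = 1 / 2 + (5 * (k : ℝ) - 1) / (12 * (k : ℝ)) ∧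
    1 / 2 + (5 * (k : ℝ) - 1) / (12 * (k : ℝ)) < 11 / 12 := by
  have : NeZero k := ⟨by omega⟩
  have hlt : (5 * (k : ℝ) - 1) / (12 * k) < 5 / 12 := by
    rw [div_lt_iff₀ (by positivity)]
    linarith
  refine ⟨?_, by field_simp; ring, by linarith⟩
  set A := ({e | MobArc k e.1 e.2} : Finset ((Bool × Fin k) × (Bool × Fin k)))
  have hA : (#A : ℝ) ≤ 3 * k := by exact_mod_cast card_mobArc_le (by omega)
  have hwin := hp.sum_win_le hw A (c := (k + 1) / 2) fun τ hτ => by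
    rw [filter_filter, div_le_iff₀ two_pos]
    exact_mod_cast (by linarith [le_two_mul_card_mobArc_not_rel hk hodd τ] : k + 1 ≤ _ * 2)
  rw [← sum_product', univ_product_univ, ← sum_filter]
  calc 1 / (6 * (k : ℝ)) * ∑ e ∈ A, ∑ x, p (w e.1.1 e.1.2) (w e.2.1 e.2.2) x x
      ≤ 1 / (6 * k) * (2 * (3 * k) - (k + 1) / 2) := by gcongr; linarith
    _ = 1 - (k + 1) / (12 * k) := by field_simp; ring
end
end

section
/- In the all-to-one Bell game with n ≥ 2 parties, any partial-order (equivalently, causal) correlations satisfy Pr[a = x] ≤ 1 − 1/(2n), where the referee picks r ∈ [n] and x ∈ {0,1} uniformly, announces r to everyone and x to everyone except r, and the parties win if r outputs x; moreover this inequality is facet-defining for the all-to-one partial-order-correlations polytope. -/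
noncomputable section

/-- Deterministic all-to-one partial-order correlations: 0/1 vectors
`(p(0|r,x))_{(r,x)}` such that the output of some (minimal) party `r` is
independent of the broadcast bit `x`. -/
def detA2O (n : ℕ) : Set (Fin n × Bool → ℝ) :=
  {v | (∀ i, v i = 0 ∨ v i = 1) ∧ ∃ r : Fin n, v (r, false) = v (r, true)}

/-- The all-to-one partial-order-correlations polytope `P^{all-to-1}_n ⊆ ℝ^{2n}`. -/
def A2Opoly (n : ℕ) : Set (Fin n × Bool → ℝ) := convexHull ℝ (detA2O n)

/-- All-to-one partial-order (equivalently, causal) correlations: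
`p r x a` is the probability that the receiver `r` outputs `a` when the bit
`x` is given to all other parties, decomposing as
`p(a|r,x) = μ(r)·q₁(a|r) + (1−μ(r))·q₂(a|r,x)`. -/
def IsA2OCorr (n : ℕ) (p : Fin n → Bool → Bool → ℝ) : Prop :=
  ∃ (μ : Fin n → ℝ) (q1 : Fin n → Bool → ℝ) (q2 : Fin n → Bool → Bool → ℝ),
    (∀ r, 0 ≤ μ r) ∧ (∑ r, μ r = 1) ∧
    (∀ r a, 0 ≤ q1 r a) ∧ (∀ r, ∑ a, q1 r a = 1) ∧
    (∀ r x a, 0 ≤ q2 r x a) ∧ (∀ r x, ∑ a, q2 r x a = 1) ∧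
    ∀ r x a, p r x a = μ r * q1 r a + (1 - μ r) * q2 r x a

theorem le_one_of_sum_eq_one {ι α : Type*} [Fintype ι] [AddCommMonoid α] [PartialOrder α]
    [IsOrderedAddMonoid α] [One α] {f : ι → α} (h0 : ∀ i, 0 ≤ f i) (h1 : ∑ i, f i = 1)
    (i : ι) : f i ≤ 1 :=
  h1 ▸ Finset.single_le_sum (fun j _ => h0 j) (Finset.mem_univ i)

theorem sum_le_card_sub_one {ι : Type*} [Fintype ι] [DecidableEq ι] {f : ι → ℝ}
    (hf : ∀ i, f i ≤ 1) {i₀ : ι} (hi₀ : f i₀ ≤ 0) : ∑ i, f i ≤ Fintype.card ι - 1 := by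
  calc ∑ i, f i ≤ ∑ i, (1 - if i = i₀ then 1 else 0) := by
        refine Finset.sum_le_sum fun i _ => ?_
        split_ifs with h
        · simpa [h] using hi₀
        · simpa using hf i
    _ = Fintype.card ι - 1 := by simp [Finset.sum_sub_distrib]

theorem sum_diag_mixture_le {μ : ℝ} {q1 : Bool → ℝ} {q2 : Bool → Bool → ℝ}
    (hμ : μ ≤ 1) (hq1 : ∑ a, q1 a = 1) (hq2 : ∀ x a, q2 x a ≤ 1) :
    ∑ x, (μ * q1 x + (1 - μ) * q2 x x) ≤ 2 - μ := by
  rw [Fintype.sum_bool] at hq1 ⊢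
  nlinarith [hq2 true true, hq2 false false]

namespace IsA2OCorr

variable {n : ℕ} {p : Fin n → Bool → Bool → ℝ}

theorem ne_zero (hp : IsA2OCorr n p) : n ≠ 0 := by
  rintro rfl
  obtain ⟨μ, -, -, -, hμ, -⟩ := hp
  simp at hμ

theorem sum_win_le (hp : IsA2OCorr n p) : ∑ r, ∑ x, p r x x ≤ 2 * n - 1 := by
  obtain ⟨μ, q1, q2, hμ0, hμ1, -, hq1, hq20, hq21, hdec⟩ := hp
  calc ∑ r, ∑ x, p r x x = ∑ r, ∑ x, (μ r * q1 r x + (1 - μ r) * q2 r x x) := by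
        simp only [hdec]
    _ ≤ ∑ r, (2 - μ r) := Finset.sum_le_sum fun r _ =>
        sum_diag_mixture_le (le_one_of_sum_eq_one hμ0 hμ1 r) (hq1 r)
          fun x => le_one_of_sum_eq_one (hq20 r x) (hq21 r x)
    _ = 2 * n - 1 := by simp [Finset.sum_sub_distrib, hμ1, mul_comm]

theorem winProb_le (hp : IsA2OCorr n p) :
    (1 / (2 * (n : ℝ))) * ∑ r, ∑ x, p r x x ≤ 1 - 1 / (2 * (n : ℝ)) := by
  have hn : (0 : ℝ) < n := Nat.cast_pos.mpr (Nat.pos_of_ne_zero hp.ne_zero)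
  calc (1 / (2 * (n : ℝ))) * ∑ r, ∑ x, p r x x ≤ (1 / (2 * (n : ℝ))) * (2 * n - 1) :=
        mul_le_mul_of_nonneg_left hp.sum_win_le (by positivity)
    _ = 1 - 1 / (2 * (n : ℝ)) := by field_simp

end IsA2OCorr

theorem bell_le_of_mem_detA2O {n : ℕ} {v : Fin n × Bool → ℝ} (hv : v ∈ detA2O n) :
    (∑ r, v (r, false)) - ∑ r, v (r, true) ≤ (n : ℝ) - 1 := by
  obtain ⟨h01, r₀, hr₀⟩ := hv
  have hle_one : ∀ r, v (r, false) - v (r, true) ≤ 1 := fun r => by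
    rcases h01 (r, false) with h | h <;> rcases h01 (r, true) with h' | h' <;> simp [h, h']
  simpa [Finset.sum_sub_distrib] using sum_le_card_sub_one hle_one (by rw [hr₀, sub_self])

theorem bell_le_of_mem_A2Opoly {n : ℕ} {v : Fin n × Bool → ℝ} (hv : v ∈ A2Opoly n) :
    (∑ r, v (r, false)) - ∑ r, v (r, true) ≤ (n : ℝ) - 1 := by
  have hlin : IsLinearMap ℝ fun v : Fin n × Bool → ℝ =>
      (∑ r, v (r, false)) - ∑ r, v (r, true) := by
    constructor
    · intro u w
      simp only [Pi.add_apply, Finset.sum_add_distrib]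
      ring
    · intro c u
      simp only [Pi.smul_apply, smul_eq_mul, ← Finset.mul_sum]
      ring
  exact convexHull_min (fun w hw => bell_le_of_mem_detA2O hw)
    (convex_halfSpace_le hlin _) hv

/-- Party `i` outputs the constant `0` (`inl i`) or `1` (`inr i`); every other party outputs `x`. -/
def tightPoint (n : ℕ) : Fin n ⊕ Fin n → Fin n × Bool → ℝ
  | .inl i => fun rx => if rx.2 then (if rx.1 = i then 1 else 0) else 1
  | .inr i => fun rx => if rx.2 then 0 else (if rx.1 = i then 0 else 1)

theorem tightPoint_mem_detA2O (n : ℕ) (m : Fin n ⊕ Fin n) : tightPoint n m ∈ detA2O n := by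
  rcases m with i | i
  · exact ⟨fun rx => by simp only [tightPoint]; split_ifs <;> simp, i, by simp [tightPoint]⟩
  · exact ⟨fun rx => by simp only [tightPoint]; split_ifs <;> simp, i, by simp [tightPoint]⟩

theorem bell_tightPoint (n : ℕ) (m : Fin n ⊕ Fin n) :
    (∑ r, tightPoint n m (r, false)) - ∑ r, tightPoint n m (r, true) = (n : ℝ) - 1 := by
  rcases m with i | i
  · simp [tightPoint]
  · simp [tightPoint, Finset.sum_ite, Finset.filter_ne', Finset.card_erase_of_mem,
      Nat.cast_pred i.pos]

theorem affineIndependent_tightPoint (n : ℕ) : AffineIndependent ℝ (tightPoint n) := by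
  rw [affineIndependent_iff_of_fintype]
  intro w hw0 hwv i
  rw [Finset.weightedVSub_eq_linear_combination _ hw0] at hwv
  have hcoord : ∀ rx, ∑ m, w m * tightPoint n m rx = 0 := fun rx => by
    simpa using congrFun hwv rx
  -- Coordinate `(i, true)` isolates `w (inl i)`; coordinate `(i, false)`, combined with
  -- `∑ w = 0`, isolates `w (inr i)`.
  rcases i with i | i
  · simpa [tightPoint, Fintype.sum_sum_type] using hcoord (i, true)
  · have hcompl : ∀ m, tightPoint n m (i, false) = 1 - if m = .inr i then 1 else 0 := by
      rintro (j | j) <;> simp only [tightPoint] <;> split_ifs <;> simp_all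
    simpa [hcompl, mul_sub, Finset.sum_sub_distrib, hw0] using hcoord (i, false)

theorem stmt18_general (n : ℕ) :
    (∀ p : Fin n → Bool → Bool → ℝ, IsA2OCorr n p →
      (1 / (2 * (n : ℝ))) * ∑ r : Fin n, ∑ x : Bool, p r x x
        ≤ 1 - 1 / (2 * (n : ℝ))) ∧
    (∀ v ∈ A2Opoly n,
      (∑ r : Fin n, v (r, false)) - ∑ r : Fin n, v (r, true) ≤ (n : ℝ) - 1) ∧
    ∃ f : Fin (2 * n) → (Fin n × Bool → ℝ), AffineIndependent ℝ f ∧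
      ∀ m, f m ∈ A2Opoly n ∧
        (∑ r : Fin n, f m (r, false)) - ∑ r : Fin n, f m (r, true)
          = (n : ℝ) - 1 := by
  let e : Fin (2 * n) ≃ Fin n ⊕ Fin n := (finCongr (two_mul n)).trans finSumFinEquiv.symm
  refine ⟨fun p hp => hp.winProb_le, fun v hv => bell_le_of_mem_A2Opoly hv,
    tightPoint n ∘ e, (affineIndependent_tightPoint n).comp_embedding e.toEmbedding,
    fun m => ⟨subset_convexHull ℝ _ (tightPoint_mem_detA2O n (e m)), bell_tightPoint n (e m)⟩⟩

/-- All-to-one Bell game: partial-order correlations win with probability at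
most `1 − 1/(2n)` (the referee picks `r` and `x` uniformly), and the
corresponding lifted inequality
`Σ_r p(0|r,0) − Σ_r p(0|r,1) ≤ n − 1` is facet-defining for the
all-to-one partial-order-correlations polytope (valid, with `2n` affinely
independent tight points). -/
theorem stmt18 (n : ℕ) (hn : 2 ≤ n) :
    (∀ p : Fin n → Bool → Bool → ℝ, IsA2OCorr n p →
      (1 / (2 * (n : ℝ))) * ∑ r : Fin n, ∑ x : Bool, p r x x
        ≤ 1 - 1 / (2 * (n : ℝ))) ∧
    (∀ v ∈ A2Opoly n,
      (∑ r : Fin n, v (r, false)) - ∑ r : Fin n, v (r, true) ≤ (n : ℝ) - 1) ∧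
    ∃ f : Fin (2 * n) → (Fin n × Bool → ℝ), AffineIndependent ℝ f ∧
      ∀ m, f m ∈ A2Opoly n ∧
        (∑ r : Fin n, f m (r, false)) - ∑ r : Fin n, f m (r, true)
          = (n : ℝ) - 1 :=
  stmt18_general n
end
end
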